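/- The boundary maps Ψ_q of the box resolution are morphisms of ℂ[z₁,…,z_m]-modules: Ψ_q ∘ T^{(q)}_{z_p} = T^{(q+1)}_{z_p} ∘ Ψ_q for every p ∈ {1,…,m}, where T^{(q)}_{z_p} denotes the direct sum over |I| = q of the compressed multiplication operators T^{𝔧_I,𝔟_I}_{z_p} on 𝒜_q. -/

import Mathlib

/-!
Both composites are continuous, so it suffices to compare them on the orthonormal basis of
normalized monomials. On the basis vector at `(I, 𝔫)` both give
`Σ_{s ∉ I} (−1)^{sign(I,s)} √(ω₀(𝔫+e_p)/ω₀(𝔫)) e_{(I ∪ {s}, 𝔫+e_p)}`, summed over those `s`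
with `𝔫 + e_p ∈ ℬ_{I ∪ {s}}`: for `Ψ ∘ T` because `ℬ_{I ∪ {s}} ⊆ ℬ_I`, for `T ∘ Ψ` because
`𝔫 ≤ 𝔫 + e_p` and boxes are lower sets.
-/

open scoped ENNReal

noncomputable section

/-- The box `ℬ^𝔟_𝔧 ⊆ ℕ^m`. -/
def Box (m : ℕ) (J : Finset (Fin m)) (b : Fin m → ℕ) : Set (Fin m → ℕ) :=
  {n | ∀ j ∈ J, n j ≤ b j}

/-- The intersection box `ℬ^{𝔟_I}_{𝔧_I} = ⋂_{i ∈ I} ℬ^{𝔟_i}_{𝔧_i}`. -/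
def BoxI (m k : ℕ) (Js : Fin k → Finset (Fin m)) (bs : Fin k → Fin m → ℕ)
    (I : Finset (Fin k)) : Set (Fin m → ℕ) :=
  {n | ∀ i ∈ I, n ∈ Box m (Js i) (bs i)}

/-- Index set for `𝒜_q = ⊕_{|I| = q} ℋ^{𝔟_I}_{𝔧_I}`. -/
def AIdx (m k : ℕ) (Js : Fin k → Finset (Fin m)) (bs : Fin k → Fin m → ℕ) (q : ℕ) :=
  {p : Finset (Fin k) × (Fin m → ℕ) // p.1.card = q ∧ p.2 ∈ BoxI m k Js bs p.1}

/-- `𝒜_q` in the coordinates of its orthonormal basis of normalized monomials. -/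
abbrev AMod (m k : ℕ) (Js : Fin k → Finset (Fin m)) (bs : Fin k → Fin m → ℕ) (q : ℕ) :=
  lp (fun _ : AIdx m k Js bs q => ℂ) (2 : ℝ≥0∞)

/-- `sign(I, e)`: the number of elements of `I` strictly smaller than `e`. -/
def signIns {k : ℕ} (I : Finset (Fin k)) (e : Fin k) : ℕ :=
  (I.filter (fun x => x < e)).card

/-- The Bergman weight `ω₀(𝔫) = (∏ᵢ nᵢ!)·m!/(|𝔫|+m)!`. -/
def omega0 (m : ℕ) (n : Fin m → ℕ) : ℝ :=
  ((∏ i, (n i).factorial) * m.factorial : ℕ) / (((∑ i, n i) + m).factorial : ℕ)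

/-- `𝔫 + e_p`. -/
def bump (m : ℕ) (p : Fin m) (n : Fin m → ℕ) : Fin m → ℕ :=
  Function.update n p (n p + 1)

theorem lp.ext_single_one {𝕜 ι F : Type*} [NormedField 𝕜] [DecidableEq ι]
    [NormedAddCommGroup F] [NormedSpace 𝕜 F] {p : ℝ≥0∞} [Fact (1 ≤ p)] (hp : p ≠ ⊤)
    {A B : lp (fun _ : ι => 𝕜) p →L[𝕜] F}
    (h : ∀ i, A (lp.single p i 1) = B (lp.single p i 1)) : A = B := by
  ext f
  have hsingle (i : ι) : lp.single (E := fun _ : ι => 𝕜) p i (f i) = f i • lp.single p i 1 := by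
    rw [← lp.single_smul, smul_eq_mul, mul_one]
  have hf := lp.hasSum_single hp f
  simp only [hsingle] at hf
  refine (hf.mapL A).unique ?_
  simpa only [Function.comp_def, map_smul, h] using hf.mapL B

theorem le_bump (m : ℕ) (p : Fin m) (n : Fin m → ℕ) : n ≤ bump m p n :=
  le_update_self_iff.2 (Nat.le_succ _)

section BoxResolution

open scoped Classical

variable {m k q r : ℕ} {Js : Fin k → Finset (Fin m)} {bs : Fin k → Fin m → ℕ}

theorem boxI_anti {I I' : Finset (Fin k)} (hII : I ⊆ I') :
    BoxI m k Js bs I' ⊆ BoxI m k Js bs I :=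
  fun _ hn i hi => hn i (hII hi)

theorem mem_boxI_of_bump_mem {I : Finset (Fin k)} {p : Fin m} {n : Fin m → ℕ}
    (h : bump m p n ∈ BoxI m k Js bs I) : n ∈ BoxI m k Js bs I :=
  fun i hi j hj => (le_bump m p n j).trans (h i hi j hj)

def IsCompressedMul (T : Fin m → (AMod m k Js bs r →L[ℂ] AMod m k Js bs r)) : Prop :=
  ∀ (p : Fin m) (x : AIdx m k Js bs r),
    T p (lp.single 2 x 1) =
      if h : bump m p x.1.2 ∈ BoxI m k Js bs x.1.1 then
        (Real.sqrt (omega0 m (bump m p x.1.2) / omega0 m x.1.2) : ℂ) •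
          (lp.single 2 (⟨(x.1.1, bump m p x.1.2), ⟨x.2.1, h⟩⟩ : AIdx m k Js bs r) 1 :
            AMod m k Js bs r)
      else 0

def IsBoxBoundary (Ψ : AMod m k Js bs q →L[ℂ] AMod m k Js bs (q + 1)) : Prop :=
  ∀ x : AIdx m k Js bs q,
    Ψ (lp.single 2 x 1) =
      ∑ s ∈ Finset.univ \ x.1.1,
        ((-1 : ℂ) ^ signIns x.1.1 s) •
          ((if h : (insert s x.1.1).card = q + 1 ∧ x.1.2 ∈ BoxI m k Js bs (insert s x.1.1)
            then lp.single 2 (⟨(insert s x.1.1, x.1.2), h⟩ : AIdx m k Js bs (q + 1)) 1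
            else 0) : AMod m k Js bs (q + 1))

def boundaryShiftSingle (p : Fin m) (x : AIdx m k Js bs q) : AMod m k Js bs (q + 1) :=
  ∑ s ∈ Finset.univ \ x.1.1,
    ((-1 : ℂ) ^ signIns x.1.1 s) •
      (if h : (insert s x.1.1).card = q + 1 ∧ bump m p x.1.2 ∈ BoxI m k Js bs (insert s x.1.1)
        then (Real.sqrt (omega0 m (bump m p x.1.2) / omega0 m x.1.2) : ℂ) •
          (lp.single 2 (⟨(insert s x.1.1, bump m p x.1.2), h⟩ : AIdx m k Js bs (q + 1)) 1 :
            AMod m k Js bs (q + 1))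
        else 0)

-- The basis vectors are given explicitly in `rw` below: `AIdx` is not reducible, so
-- `rw` cannot match an anonymous constructor against a pattern of type `AIdx`.
theorem IsBoxBoundary.apply_compressedMul_single
    {Ψ : AMod m k Js bs q →L[ℂ] AMod m k Js bs (q + 1)}
    {T : Fin m → (AMod m k Js bs q →L[ℂ] AMod m k Js bs q)}
    (hΨ : IsBoxBoundary Ψ) (hT : IsCompressedMul T) (p : Fin m) (x : AIdx m k Js bs q) :
    Ψ (T p (lp.single 2 x 1)) = boundaryShiftSingle p x := by
  rw [hT, boundaryShiftSingle]
  split_ifs with hx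
  · rw [map_smul, hΨ ⟨(x.1.1, bump m p x.1.2), x.2.1, hx⟩, Finset.smul_sum]
    refine Finset.sum_congr rfl fun s _ => ?_
    rw [smul_comm, smul_dite, smul_zero]
  · rw [map_zero]
    refine (Finset.sum_eq_zero fun s _ => ?_).symm
    rw [dif_neg fun h => hx (boxI_anti (Finset.subset_insert s _) h.2), smul_zero]

theorem IsCompressedMul.apply_boxBoundary_single
    {Ψ : AMod m k Js bs q →L[ℂ] AMod m k Js bs (q + 1)}
    {T : Fin m → (AMod m k Js bs (q + 1) →L[ℂ] AMod m k Js bs (q + 1))}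
    (hT : IsCompressedMul T) (hΨ : IsBoxBoundary Ψ) (p : Fin m) (x : AIdx m k Js bs q) :
    T p (Ψ (lp.single 2 x 1)) = boundaryShiftSingle p x := by
  rw [hΨ, map_sum, boundaryShiftSingle]
  refine Finset.sum_congr rfl fun s _ => ?_
  rw [map_smul]
  congr 1
  by_cases hn : (insert s x.1.1).card = q + 1 ∧ x.1.2 ∈ BoxI m k Js bs (insert s x.1.1)
  · rw [dif_pos hn, hT p ⟨(insert s x.1.1, x.1.2), hn⟩]
    exact dite_congr (by simp [hn.1]) (fun _ => rfl) fun _ => rfl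
  · rw [dif_neg hn, map_zero, dif_neg fun h => hn ⟨h.1, mem_boxI_of_bump_mem h.2⟩]

end BoxResolution

open scoped Classical in
/-- the boundary map `Ψ_q` of the box resolution intertwines the compressed
multiplication operators: `Ψ_q ∘ T^{(q)}_{z_p} = T^{(q+1)}_{z_p} ∘ Ψ_q` for each
`p ∈ {1,…,m}`, i.e. `Ψ_q` is a morphism of `ℂ[z₁,…,z_m]`-modules.  Here the operators are
characterized on the orthonormal basis: the compressed multiplication `T^{(r)}_{z_p}` sends
the basis vector at `(I, 𝔫)` to `√(ω₀(𝔫+e_p)/ω₀(𝔫))` times the one at `(I, 𝔫+e_p)` when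
`𝔫+e_p ∈ ℬ^{𝔟_I}_{𝔧_I}` and to `0` otherwise, and `Ψ_q` sends the basis vector at `(I, 𝔫)`
to `Σ_{s ∉ I} (−1)^{sign(I,s)}` times the basis vector at `(I ∪ {s}, 𝔫)` (when
`𝔫 ∈ ℬ^{𝔟_{I∪{s}}}_{𝔧_{I∪{s}}}`, `0` otherwise). -/
theorem psi_module_morphism (m k q : ℕ) (Js : Fin k → Finset (Fin m))
    (bs : Fin k → Fin m → ℕ)
    (Tq : Fin m → (AMod m k Js bs q →L[ℂ] AMod m k Js bs q))
    (Tq1 : Fin m → (AMod m k Js bs (q + 1) →L[ℂ] AMod m k Js bs (q + 1)))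
    (Ψ : AMod m k Js bs q →L[ℂ] AMod m k Js bs (q + 1))
    (hTq : ∀ (p : Fin m) (x : AIdx m k Js bs q),
      Tq p (lp.single 2 x 1) =
        if h : bump m p x.1.2 ∈ BoxI m k Js bs x.1.1 then
          (Real.sqrt (omega0 m (bump m p x.1.2) / omega0 m x.1.2) : ℂ) •
            (lp.single 2 (⟨(x.1.1, bump m p x.1.2), ⟨x.2.1, h⟩⟩ : AIdx m k Js bs q) 1 :
              AMod m k Js bs q)
        else 0)
    (hTq1 : ∀ (p : Fin m) (x : AIdx m k Js bs (q + 1)),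
      Tq1 p (lp.single 2 x 1) =
        if h : bump m p x.1.2 ∈ BoxI m k Js bs x.1.1 then
          (Real.sqrt (omega0 m (bump m p x.1.2) / omega0 m x.1.2) : ℂ) •
            (lp.single 2 (⟨(x.1.1, bump m p x.1.2), ⟨x.2.1, h⟩⟩ : AIdx m k Js bs (q + 1)) 1 :
              AMod m k Js bs (q + 1))
        else 0)
    (hΨ : ∀ x : AIdx m k Js bs q,
      Ψ (lp.single 2 x 1) =
        ∑ s ∈ Finset.univ \ x.1.1,
          ((-1 : ℂ) ^ signIns x.1.1 s) •
            ((if h : (insert s x.1.1).card = q + 1 ∧ x.1.2 ∈ BoxI m k Js bs (insert s x.1.1)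
              then lp.single 2 (⟨(insert s x.1.1, x.1.2), h⟩ : AIdx m k Js bs (q + 1)) 1
              else 0) : AMod m k Js bs (q + 1))) :
    ∀ p : Fin m, Ψ ∘L Tq p = Tq1 p ∘L Ψ := by
  intro p
  refine lp.ext_single_one ENNReal.ofNat_ne_top fun x => ?_
  rw [ContinuousLinearMap.comp_apply, ContinuousLinearMap.comp_apply,
    IsBoxBoundary.apply_compressedMul_single hΨ hTq,
    IsCompressedMul.apply_boxBoundary_single hTq1 hΨ]
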